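/- arXiv:1511.00426 — 7 statements merged into one kernel-verified Lean document; each statement's English description precedes it below -/
import Mathlib

section
/- For any permutation σ ∈ S_n, p(σ) = 2·inv(σ) + v(σ), where p(σ) = |{(i,j) : j < σ(i) or i > σ⁻¹(j)}|, inv counts inversions and v counts versions (non-inversion pairs). -/
/-!
Substituting `j = σ k` in the second coordinate turns `p(σ)` into the number of pairs `(i, k)`
with `σ k < σ i` or `k < i`. These are the pairs with `k < i`, which are as many as the pairs
`i < k`, that is `inv(σ) + v(σ)`, together with the pairs with `i < k` and `σ k < σ i`, which
are the inversions once more.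
-/

open Finset

lemma Finset.card_filter_snd_lt_fst {α : Type*} [Fintype α] [LinearOrder α] :
    #{p : α × α | p.2 < p.1} = #{p : α × α | p.1 < p.2} :=
  card_equiv (Equiv.prodComm α α) (by simp)

namespace Equiv.Perm

variable {α : Type*} [Fintype α] [LinearOrder α] (σ : Perm α)

lemma card_filter_lt_or_inv_lt_eq :
    #{p : α × α | p.2 < σ p.1 ∨ σ⁻¹ p.2 < p.1} = #{p : α × α | σ p.2 < σ p.1 ∨ p.2 < p.1} :=
  card_equiv ((Equiv.refl α).prodCongr σ⁻¹) (by simp)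

lemma card_filter_lt_or_lt_eq :
    #{p : α × α | σ p.2 < σ p.1 ∨ p.2 < p.1}
      = #{p : α × α | p.2 < p.1} + #{p : α × α | p.1 < p.2 ∧ σ p.2 < σ p.1} := by
  rw [← card_filter_add_card_filter_not (fun p : α × α => p.2 < p.1), filter_filter,
    filter_filter]
  congr 2 <;> ext p
  · simp only [mem_filter, mem_univ, true_and]
    tauto
  · simp only [mem_filter, mem_univ, true_and, not_lt]
    constructor
    · rintro ⟨hσ | hlt, hle⟩
      · exact ⟨hle.lt_of_ne fun h => hσ.ne (by rw [h]), hσ⟩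
      · exact absurd hlt hle.not_gt
    · rintro ⟨hlt, hσ⟩
      exact ⟨Or.inl hσ, hlt.le⟩

lemma card_filter_lt_eq_inv_add_ver :
    #{p : α × α | p.1 < p.2}
      = #{p : α × α | p.1 < p.2 ∧ σ p.2 < σ p.1} + #{p : α × α | p.1 < p.2 ∧ σ p.1 < σ p.2} := by
  rw [← card_filter_add_card_filter_not (s := {p : α × α | p.1 < p.2})
    (fun p : α × α => σ p.2 < σ p.1), filter_filter, filter_filter]
  congr 2
  ext p
  simp only [mem_filter, mem_univ, true_and, not_lt, and_congr_right_iff]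
  exact fun hlt => (σ.injective.ne hlt.ne).le_iff_lt

end Equiv.Perm

/-- p(σ) = 2·inv(σ) + v(σ). -/
theorem stmt3 (n : ℕ) (σ : Equiv.Perm (Fin n)) :
    (Finset.univ.filter (fun p : Fin n × Fin n => p.2 < σ p.1 ∨ σ⁻¹ p.2 < p.1)).card
      = 2 * (Finset.univ.filter (fun p : Fin n × Fin n => p.1 < p.2 ∧ σ p.2 < σ p.1)).card
        + (Finset.univ.filter (fun p : Fin n × Fin n => p.1 < p.2 ∧ σ p.1 < σ p.2)).card := by
  rw [σ.card_filter_lt_or_inv_lt_eq, σ.card_filter_lt_or_lt_eq, card_filter_snd_lt_fst,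
    σ.card_filter_lt_eq_inv_add_ver]
  ring
end

section
/- Let λ₁ ≤ λ₂ ≤ ⋯ ≤ λ_n = n be a partition with λ_i ≥ i for all i. The number of invertible n×n matrices A over the finite field F_q such that A_{ij} ≠ 0 implies j ≤ λ_i equals q^{n(n−1)/2} · ∏_{i=1}^{n} (q^{λ_i + 1 − i} − 1). -/
open Finset

/-- The submodule of vectors supported on the first `m` coordinates. -/
def suppSubmodule (n m : ℕ) (F : Type*) [Field F] : Submodule F (Fin n → F) where
  carrier := {w | ∀ j : Fin n, w j ≠ 0 → (j : ℕ) < m}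
  zero_mem' := by intro j hj; simp at hj
  add_mem' := by
    intro a b ha hb j hj
    by_contra h
    have ha' : a j = 0 := by by_contra h'; exact h (ha j h')
    have hb' : b j = 0 := by by_contra h'; exact h (hb j h')
    exact hj (by simp [ha', hb'])
  smul_mem' := by
    intro c w hw j hj
    exact hw j fun h0 => hj (by simp [h0])

lemma mem_suppSubmodule {n m : ℕ} {F : Type*} [Field F] {w : Fin n → F} :
    w ∈ suppSubmodule n m F ↔ ∀ j : Fin n, w j ≠ 0 → (j : ℕ) < m := Iff.rfl

lemma card_supported (n m : ℕ) (hm : m ≤ n) (F : Type*) [Field F] [Fintype F] :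
    Nat.card {w : Fin n → F // ∀ j : Fin n, w j ≠ 0 → (j : ℕ) < m}
      = Fintype.card F ^ m := by
  classical
  have e : {w : Fin n → F // ∀ j : Fin n, w j ≠ 0 → (j : ℕ) < m} ≃ (Fin m → F) :=
  { toFun := fun w i => w.1 ⟨i.1, lt_of_lt_of_le i.2 hm⟩
    invFun := fun f => ⟨fun j => if h : (j : ℕ) < m then f ⟨j.1, h⟩ else 0, fun j hj => by
      by_contra h; simp [h] at hj⟩
    left_inv := fun w => by
      ext j
      by_cases h : (j : ℕ) < m
      · simp [h]
      · simp only [h, dif_neg, not_false_iff]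
        by_contra h0
        exact h (w.2 j fun hw => h0 hw.symm)
    right_inv := fun f => by ext i; simp }
  rw [Nat.card_congr e]
  simp [Nat.card_eq_fintype_card]

lemma card_fiber (n m k : ℕ) (hm : m ≤ n) (hk : k < m) (F : Type*) [Field F] [Fintype F]
    (v : Fin k → (Fin n → F)) (hli : LinearIndependent F v)
    (hsupp : ∀ i, v i ∈ suppSubmodule n m F) :
    Nat.card {w : Fin n → F // (∀ j : Fin n, w j ≠ 0 → (j : ℕ) < m) ∧
        w ∉ Submodule.span F (Set.range v)}
      = Fintype.card F ^ m - Fintype.card F ^ k := by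
  classical
  have hspan : Submodule.span F (Set.range v) ≤ suppSubmodule n m F :=
    Submodule.span_le.2 (Set.range_subset_iff.2 hsupp)
  have hPQ : ∀ w : Fin n → F, w ∈ Submodule.span F (Set.range v) →
      ∀ j : Fin n, w j ≠ 0 → (j : ℕ) < m := fun w hw => hspan hw
  have hQ : Nat.card {w : Fin n → F // w ∈ Submodule.span F (Set.range v)}
      = Fintype.card F ^ k := by
    rw [Nat.card_eq_fintype_card]
    rw [Module.card_eq_pow_finrank (K := F) (V := Submodule.span F (Set.range v))]
    rw [finrank_span_eq_card hli]
    simp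
  have hP : Nat.card {w : Fin n → F // ∀ j : Fin n, w j ≠ 0 → (j : ℕ) < m}
      = Fintype.card F ^ m := card_supported n m hm F
  -- filter arithmetic
  rw [Nat.card_eq_fintype_card] at hQ hP ⊢
  rw [Fintype.card_subtype] at hQ hP ⊢
  rw [← hQ, ← hP]
  have hset : (univ.filter (fun w : Fin n → F => (∀ j : Fin n, w j ≠ 0 → (j : ℕ) < m) ∧
      w ∉ Submodule.span F (Set.range v)))
      = (univ.filter (fun w : Fin n → F => ∀ j : Fin n, w j ≠ 0 → (j : ℕ) < m)) \
        (univ.filter (fun w : Fin n → F => w ∈ Submodule.span F (Set.range v))) := by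
    ext w
    simp only [mem_filter, mem_univ, true_and, mem_sdiff]
  have hsub : (univ.filter (fun w : Fin n → F => w ∈ Submodule.span F (Set.range v))) ⊆
      univ.filter (fun w : Fin n → F => ∀ j : Fin n, w j ≠ 0 → (j : ℕ) < m) := by
    intro w hw
    simp only [mem_filter, mem_univ, true_and] at hw ⊢
    exact hPQ w hw
  rw [hset, card_sdiff_of_subset hsub]

lemma count_aux (n : ℕ) (F : Type*) [Field F] [Fintype F] (μ : ℕ → ℕ)
    (hmono : Monotone μ) (hlen : ∀ i, μ i ≤ n) (hgt : ∀ i, i < n → i < μ i) :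
    ∀ k, k ≤ n →
      Nat.card {v : Fin k → (Fin n → F) //
          LinearIndependent F v ∧ ∀ (i : Fin k) (j : Fin n), v i j ≠ 0 → (j : ℕ) < μ i.1}
        = ∏ i ∈ Finset.range k, (Fintype.card F ^ μ i - Fintype.card F ^ i) := by
  classical
  intro k
  induction k with
  | zero =>
    intro _
    have hall : ∀ v : Fin 0 → Fin n → F,
        LinearIndependent F v ∧ ∀ (i : Fin 0) (j : Fin n), v i j ≠ 0 → (j : ℕ) < μ i.1 :=
      fun v => ⟨linearIndependent_empty_type, fun i => i.elim0⟩
    rw [Nat.card_congr (Equiv.subtypeUnivEquiv hall)]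
    simp [Nat.card_eq_fintype_card]
  | succ k ih =>
    intro hk
    have hkn : k < n := hk
    have hk' : k ≤ n := le_of_lt hkn
    have hkm : k < μ k := hgt k hkn
    set q := Fintype.card F with hq
    set Tk := {v : Fin k → (Fin n → F) //
        LinearIndependent F v ∧ ∀ (i : Fin k) (j : Fin n), v i j ≠ 0 → (j : ℕ) < μ i.1}
      with hTk
    let Fib : Tk → Type _ := fun v => {w : Fin n → F //
        (∀ j : Fin n, w j ≠ 0 → (j : ℕ) < μ k) ∧
        w ∉ Submodule.span F (Set.range v.1)}
    have e : {v : Fin (k + 1) → (Fin n → F) //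
          LinearIndependent F v ∧ ∀ (i : Fin (k + 1)) (j : Fin n), v i j ≠ 0 → (j : ℕ) < μ i.1}
        ≃ Σ v : Tk, Fib v :=
    { toFun := fun v =>
        ⟨⟨Fin.init v.1, by
            have h := v.2.1
            rw [← Fin.snoc_init_self v.1, linearIndependent_fin_snoc] at h
            exact h.1, fun i j hij => by
            have := v.2.2 i.castSucc j hij
            simpa using this⟩,
          ⟨v.1 (Fin.last k), by
            have h := v.2.2 (Fin.last k)
            exact fun j hj => by simpa using h j hj, by
            have h := v.2.1
            rw [← Fin.snoc_init_self v.1, linearIndependent_fin_snoc] at h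
            exact h.2⟩⟩
      invFun := fun p =>
        ⟨Fin.snoc p.1.1 p.2.1, by
            rw [linearIndependent_fin_snoc]
            exact ⟨p.1.2.1, p.2.2.2⟩,
          fun i => by
            refine Fin.lastCases ?_ ?_ i
            · intro j hij
              rw [Fin.snoc_last] at hij
              simpa using p.2.2.1 j hij
            · intro i' j hij
              rw [Fin.snoc_castSucc] at hij
              simpa using p.1.2.2 i' j hij⟩
      left_inv := fun v => Subtype.ext (Fin.snoc_init_self v.1)
      right_inv := fun p => by
        obtain ⟨⟨v, hv⟩, ⟨w, hw⟩⟩ := p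
        refine Sigma.ext (Subtype.ext (by simp)) ?_
        rw [Subtype.heq_iff_coe_eq]
        · simp
        · intro x
          simp }
    rw [Nat.card_congr e, Nat.card_eq_fintype_card, Fintype.card_sigma]
    have hfib : ∀ v : Tk, Fintype.card (Fib v) = q ^ μ k - q ^ k := by
      intro v
      rw [← Nat.card_eq_fintype_card]
      refine card_fiber n (μ k) k (hlen k) hkm F v.1 v.2.1 ?_
      intro i
      rw [mem_suppSubmodule]
      intro j hj
      exact lt_of_lt_of_le (v.2.2 i j hj) (hmono (le_of_lt i.2))
    simp only [hfib, Finset.sum_const, smul_eq_mul, Finset.card_univ]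
    rw [← Nat.card_eq_fintype_card, ih hk', Finset.prod_range_succ]

/-- The number of invertible n×n matrices over F_q supported on the staircase
λ₁ ≤ … ≤ λ_n = n (with λ_i ≥ i, 1-indexed) equals q^{n(n−1)/2}·∏ (q^{λ_i+1−i} − 1).
Here `lam` is 0-indexed, so the 1-indexed conditions read `i+1 ≤ lam i` and the
exponent λ_i+1−i becomes `lam i - i`. -/
theorem stmt8 (n : ℕ) (hn : 0 < n) (F : Type*) [Field F] [Fintype F]
    (lam : Fin n → ℕ) (hmono : Monotone lam)
    (hge : ∀ i : Fin n, (i : ℕ) + 1 ≤ lam i) (hle : ∀ i : Fin n, lam i ≤ n)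
    (hlast : lam ⟨n - 1, by omega⟩ = n) :
    Nat.card {A : Matrix (Fin n) (Fin n) F //
        IsUnit A ∧ ∀ i j : Fin n, A i j ≠ 0 → (j : ℕ) < lam i}
      = Fintype.card F ^ (n * (n - 1) / 2) *
          ∏ i : Fin n, (Fintype.card F ^ (lam i - (i : ℕ)) - 1) := by
  classical
  set q := Fintype.card F with hq
  set μ : ℕ → ℕ := fun i => if h : i < n then lam ⟨i, h⟩ else n with hμ
  have hmono' : Monotone μ := by
    intro a b hab
    simp only [hμ]
    by_cases ha : a < n
    · by_cases hb : b < n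
      · simp only [dif_pos ha, dif_pos hb]
        exact hmono hab
      · simp only [dif_pos ha, dif_neg hb]
        exact hle _
    · have hb : ¬ b < n := fun h => ha (lt_of_le_of_lt hab h)
      simp [dif_neg ha, dif_neg hb]
  have hlen' : ∀ i, μ i ≤ n := by
    intro i
    simp only [hμ]
    by_cases h : i < n <;> simp [h]
    exact hle _
  have hgt' : ∀ i, i < n → i < μ i := by
    intro i h
    simp only [hμ, dif_pos h]
    exact hge ⟨i, h⟩
  have key := count_aux n F μ hmono' hlen' hgt' n le_rfl
  have hμval : ∀ i : Fin n, μ i.1 = lam i := by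
    intro i
    simp only [hμ, dif_pos i.2]
  have e : {A : Matrix (Fin n) (Fin n) F //
        IsUnit A ∧ ∀ i j : Fin n, A i j ≠ 0 → (j : ℕ) < lam i}
      ≃ {v : Fin n → (Fin n → F) //
        LinearIndependent F v ∧ ∀ (i : Fin n) (j : Fin n), v i j ≠ 0 → (j : ℕ) < μ i.1} := by
    refine Equiv.subtypeEquiv (Matrix.of).symm ?_
    intro A
    constructor
    · rintro ⟨hA, hsupp⟩
      refine ⟨Matrix.linearIndependent_rows_iff_isUnit.2 hA, ?_⟩
      intro i j hij
      rw [hμval i]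
      exact hsupp i j hij
    · rintro ⟨hA, hsupp⟩
      refine ⟨Matrix.linearIndependent_rows_iff_isUnit.1 hA, ?_⟩
      intro i j hij
      have := hsupp i j hij
      rwa [hμval i] at this
  rw [Nat.card_congr e, key]
  rw [← Fin.prod_univ_eq_prod_range (fun i => q ^ μ i - q ^ i) n]
  have hterm : ∀ i : Fin n, q ^ μ i.1 - q ^ i.1 = q ^ i.1 * (q ^ (lam i - i.1) - 1) := by
    intro i
    rw [hμval i, Nat.mul_sub, mul_one, ← pow_add,
      Nat.add_sub_cancel' (le_of_lt (Nat.lt_of_succ_le (hge i)))]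
  rw [Finset.prod_congr rfl (fun i _ => hterm i), Finset.prod_mul_distrib]
  congr 1
  rw [Finset.prod_pow_eq_pow_sum]
  congr 1
  rw [Fin.sum_univ_eq_sum_range (fun i => i) n]
  exact Finset.sum_range_id n
end

section
/- Let λ₁ ≤ ⋯ ≤ λ_n = n with λ_i ≥ i. Then (q−1)^n · Σ_σ q^{p(σ)} = q^{n(n−1)/2} · ∏_{i=1}^{n} (q^{λ_i+1−i} − 1), where the sum is over permutations σ ∈ S_n with σ(i) ≤ λ_i for all i, and p(σ) = inv(σ) + n(n−1)/2. -/
/-!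
Splitting the pairs `(i, j)` according to whether `j < σ i`, the statistic `p(σ)` becomes
`C(n, 2) + inv σ`. A permutation is determined by `v = σ 0` together with the permutation `e` of
the remaining positions and values; then `inv σ = v + inv e`, and since `λ` is monotone, `v < λ₀`
lies below every later bound, so `σ` fits under `λ` iff `e` fits under `j ↦ λ_{j+1} - 1`.
By induction the inversion generating function over the staircase is `∏ [λᵢ - i]_q`, and
`(q - 1) [k]_q = q ^ k - 1`.
-/

open Finset Equiv

namespace Equiv.Perm

variable {m : ℕ}

def numInversions (σ : Perm (Fin m)) : ℕ :=
  #{p : Fin m × Fin m | p.1 < p.2 ∧ σ p.2 < σ p.1}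

lemma numInversions_eq_sum (σ : Perm (Fin m)) :
    numInversions σ = ∑ i, #{j | i < j ∧ σ j < σ i} := by
  simp only [numInversions, card_filter, Fintype.sum_prod_type]

lemma card_filter_lt_apply (σ : Perm (Fin m)) :
    #{p : Fin m × Fin m | p.2 < σ p.1} = m * (m - 1) / 2 := by
  calc #{p : Fin m × Fin m | p.2 < σ p.1}
      = ∑ i, #{j | j < σ i} := by simp only [card_filter, Fintype.sum_prod_type]
    _ = ∑ i, (σ i : ℕ) := by simp only [filter_gt_eq_Iio, Fin.card_Iio]
    _ = ∑ k ∈ range m, k := by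
      rw [Equiv.sum_comp σ (fun i : Fin m ↦ (i : ℕ))]
      exact Fin.sum_univ_eq_sum_range (fun k ↦ k) m
    _ = m * (m - 1) / 2 := sum_range_id m

lemma card_filter_not_lt_apply_and_symm_lt (σ : Perm (Fin m)) :
    #{p : Fin m × Fin m | ¬ p.2 < σ p.1 ∧ σ⁻¹ p.2 < p.1} = numInversions σ := by
  refine card_nbij' (fun p ↦ (σ⁻¹ p.2, p.1)) (fun p ↦ (p.2, σ p.1)) ?_ ?_ ?_ ?_
  · rintro ⟨i, j⟩ h
    simp only [coe_filter, mem_univ, true_and, Set.mem_ofPred_eq, not_lt] at h ⊢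
    refine ⟨h.2, (h.1.trans_eq (σ.apply_symm_apply j).symm).lt_of_ne ?_⟩
    exact σ.injective.ne h.2.ne'
  · rintro ⟨a, b⟩ h
    simp only [coe_filter, mem_univ, true_and, Set.mem_ofPred_eq, not_lt] at h ⊢
    simpa [h.2.le] using h.1
  · intro p _; simp
  · intro p _; simp

lemma card_filter_lt_apply_or_symm_lt (σ : Perm (Fin m)) :
    #{p : Fin m × Fin m | p.2 < σ p.1 ∨ σ⁻¹ p.2 < p.1} = m * (m - 1) / 2 + numInversions σ := by
  rw [← card_filter_lt_apply σ, ← card_filter_not_lt_apply_and_symm_lt σ,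
    ← card_union_of_disjoint (disjoint_filter.2 fun _ _ h h' ↦ h'.1 h), ← filter_or]
  congr 1
  ext p
  simp only [mem_filter]
  tauto

end Equiv.Perm

namespace Fin

variable {n : ℕ}

lemma val_succAbove_lt_iff {v : Fin (n + 1)} {x : Fin n} {c : ℕ} (hv : (v : ℕ) < c) :
    (v.succAbove x : ℕ) < c ↔ (x : ℕ) < c - 1 := by
  by_cases h : x.castSucc < v
  · rw [succAbove_of_castSucc_lt _ _ h, val_castSucc]
    rw [lt_def, val_castSucc] at h
    omega
  · rw [succAbove_of_le_castSucc _ _ (not_lt.1 h), val_succ]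
    omega

def consPerm (v : Fin (n + 1)) (e : Perm (Fin n)) : Perm (Fin (n + 1)) :=
  (finSuccEquiv n).trans (e.optionCongr.trans (finSuccEquiv' v).symm)

@[simp]
lemma consPerm_zero (v : Fin (n + 1)) (e : Perm (Fin n)) : consPerm v e 0 = v := by
  simp [consPerm]

@[simp]
lemma consPerm_succ (v : Fin (n + 1)) (e : Perm (Fin n)) (j : Fin n) :
    consPerm v e j.succ = v.succAbove (e j) := by
  simp [consPerm]

lemma consPerm_injective :
    Function.Injective fun p : Fin (n + 1) × Perm (Fin n) ↦ consPerm p.1 p.2 := by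
  rintro ⟨v, e⟩ ⟨v', e'⟩ h
  have hv : v = v' := by simpa using congr($h 0)
  subst hv
  refine Prod.ext rfl (Equiv.ext fun j ↦ succAbove_right_injective (p := v) ?_)
  simpa using congr($h j.succ)

noncomputable def consPermEquiv : Fin (n + 1) × Perm (Fin n) ≃ Perm (Fin (n + 1)) :=
  .ofBijective _ <| (Fintype.bijective_iff_injective_and_card _).2
    ⟨consPerm_injective, by simp [Fintype.card_perm, Nat.factorial_succ]⟩

lemma numInversions_consPerm (v : Fin (n + 1)) (e : Perm (Fin n)) :
    (consPerm v e).numInversions = v + e.numInversions := by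
  rw [Perm.numInversions_eq_sum, Perm.numInversions_eq_sum, sum_univ_succ]
  congr 1
  · calc #{j | 0 < j ∧ consPerm v e j < consPerm v e 0}
        = #{j : Fin n | (e j : ℕ) < v} := by
          simp only [card_filter_univ_succ, lt_irrefl, false_and, if_false, succ_pos, true_and,
            consPerm_zero, consPerm_succ, succAbove_lt_iff_castSucc_lt]
          rfl
      _ = #{j : Fin n | (j : ℕ) < v} := by
          simp only [card_filter]
          exact Equiv.sum_comp e fun j : Fin n ↦ if (j : ℕ) < v then 1 else 0
      _ = v := by rw [card_filter_val_lt]; have := v.is_le; omega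
  · refine sum_congr rfl fun j _ ↦ ?_
    rw [card_filter_univ_succ]
    simp [succAbove_lt_succAbove_iff]

lemma consPerm_lt_iff {lam : Fin (n + 1) → ℕ} (hmono : Monotone lam)
    (v : Fin (n + 1)) (e : Perm (Fin n)) :
    (∀ i, (consPerm v e i : ℕ) < lam i) ↔ (v : ℕ) < lam 0 ∧ ∀ j, (e j : ℕ) < lam j.succ - 1 := by
  rw [forall_fin_succ, consPerm_zero]
  refine and_congr_right fun hv ↦ forall_congr' fun j ↦ ?_
  rw [consPerm_succ, val_succAbove_lt_iff (hv.trans_le (hmono (zero_le _)))]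

lemma sum_filter_val_lt {M : Type*} [AddCommMonoid M] (f : ℕ → M) {c : ℕ} (hc : c ≤ n) :
    ∑ i ∈ {i : Fin n | (i : ℕ) < c}, f i = ∑ k ∈ range c, f k := by
  rw [sum_filter, sum_univ_eq_sum_range (fun k ↦ if k < c then f k else 0), ← sum_filter]
  congr 1
  ext k
  simp only [mem_filter, mem_range]
  omega

end Fin

open Fin in
theorem sum_pow_numInversions_staircase {R : Type*} [CommSemiring R] (q : R) {m : ℕ}
    (lam : Fin m → ℕ) (hmono : Monotone lam) (hle : ∀ i, lam i ≤ m) :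
    ∑ σ ∈ univ.filter (fun σ : Perm (Fin m) ↦ ∀ i, (σ i : ℕ) < lam i), q ^ σ.numInversions
      = ∏ i, ∑ k ∈ range (lam i - i), q ^ k := by
  induction m with
  | zero => simp [Perm.numInversions]
  | succ n ih =>
    set lam' : Fin n → ℕ := fun j ↦ lam j.succ - 1
    have hmono' : Monotone lam' := fun a b hab ↦
      Nat.sub_le_sub_right (hmono (succ_le_succ_iff.2 hab)) 1
    have hle' : ∀ j, lam' j ≤ n := fun j ↦ Nat.sub_le_of_le_add (hle j.succ)
    calc _ = ∑ p ∈ ({v | (v : ℕ) < lam 0} : Finset (Fin (n + 1))) ×ˢ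
            ({e | ∀ j, (e j : ℕ) < lam' j} : Finset (Perm (Fin n))),
          q ^ ((p.1 : ℕ) + p.2.numInversions) :=
        (sum_equiv consPermEquiv (fun p ↦ by simp [consPermEquiv, consPerm_lt_iff hmono, lam'])
          fun p _ ↦ by simp [consPermEquiv, numInversions_consPerm]).symm
      _ = (∑ v ∈ {v : Fin (n + 1) | (v : ℕ) < lam 0}, q ^ (v : ℕ)) *
          ∑ e ∈ {e : Perm (Fin n) | ∀ j, (e j : ℕ) < lam' j}, q ^ e.numInversions := by
        simp only [sum_product, sum_mul_sum, pow_add]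
      _ = (∑ k ∈ range (lam 0), q ^ k) * ∏ j, ∑ k ∈ range (lam' j - j), q ^ k := by
        rw [sum_filter_val_lt _ (hle 0), ih lam' hmono' hle']
      _ = _ := by
        rw [prod_univ_succ]
        congr 3 with j
        rw [val_succ, Nat.sub_sub, add_comm]

/-- (q−1)^n · Σ_σ q^{p(σ)} = q^{n(n−1)/2} · ∏ (q^{λ_i+1−i} − 1), the sum being over
σ ∈ S_n with σ(i) ≤ λ_i for all i (0-indexed: (σ i) < lam i), where
p(σ) = |{(i,j) : j < σ(i) or i > σ⁻¹(j)}|. -/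
theorem stmt9 (n : ℕ) (lam : Fin n → ℕ) (hmono : Monotone lam)
    (hle : ∀ i : Fin n, lam i ≤ n) (q : ℤ) :
    (q - 1) ^ n *
      ∑ σ ∈ Finset.univ.filter
          (fun σ : Equiv.Perm (Fin n) => ∀ i : Fin n, ((σ i : ℕ)) < lam i),
        q ^ (Finset.univ.filter
          (fun p : Fin n × Fin n => p.2 < σ p.1 ∨ σ⁻¹ p.2 < p.1)).card
      = q ^ (n * (n - 1) / 2) * ∏ i : Fin n, (q ^ (lam i - (i : ℕ)) - 1) := by
  simp only [Perm.card_filter_lt_apply_or_symm_lt, pow_add, ← mul_sum,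
    sum_pow_numInversions_staircase q lam hmono hle]
  rw [mul_left_comm, ← Fin.prod_const n (q - 1), ← prod_mul_distrib]
  simp only [mul_comm (q - 1), geom_sum_mul]
end

section
/- Let C ≠ {1} be a finite maximal prefix-free set in {a,b}* with associated prefix-closed set P of proper prefixes, C_a the words of C ending in a, and P_b = {1} ∪ (P ∩ {a,b}*b). Then the map sending w ∈ C_a to the unique p ∈ P_b with w ∈ p a* is a bijection from C_a onto P_b. -/
/-! The map is "strip the trailing a's", `List.rdropWhile (!·)`, which sends `p aᵐ` to `p` whenever
`p` is empty or ends in `b`; this gives the factorisation and its uniqueness. Two words of `C_a`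
with the same image lie in one chain `p a*`, so they are comparable and prefix-freeness makes them
equal. For surjectivity, take `p ∈ P_b` and `n` exceeding the length of every word of `C`: by maximality some
`c ∈ C` is comparable with `p aⁿ`, hence a prefix of it, and `c` cannot be a prefix of `p` (for
`p = 1` this would force `C = {1}`, otherwise it would contradict prefix-freeness), so
`c = p aᵏ` with `k ≥ 1`. -/

/-- A set of words is prefix-free if no element is a proper prefix of another.
The letter `a` is `false` and the letter `b` is `true`. -/
def PrefixFree (C : Set (List Bool)) : Prop :=
  ∀ u ∈ C, ∀ v ∈ C, u <+: v → u = v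

/-- The set of proper prefixes of elements of C. -/
def Pset (C : Set (List Bool)) : Set (List Bool) :=
  {p | ∃ c ∈ C, p <+: c ∧ p ≠ c}

/-- Words of C ending with the letter a (= false). -/
def Ca (C : Set (List Bool)) : Set (List Bool) :=
  {w ∈ C | ∃ u : List Bool, w = u ++ [false]}

/-- P_b = {1} ∪ (P ∩ {a,b}*b). -/
def Pb (C : Set (List Bool)) : Set (List Bool) :=
  insert [] {p ∈ Pset C | ∃ u : List Bool, p = u ++ [true]}

namespace List

variable {α : Type*}

theorem rdropWhile_append_replicate {p : α → Bool} {x : α} (hx : p x) (l : List α) (m : ℕ) :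
    (l ++ replicate m x).rdropWhile p = l.rdropWhile p := by
  induction m with
  | zero => simp
  | succ m ih => rw [replicate_succ', ← append_assoc, rdropWhile_concat_pos _ _ _ hx, ih]

theorem prefix_append_replicate {c l : List α} {x : α} {n : ℕ} (h : c <+: l ++ replicate n x) :
    c <+: l ∨ ∃ k, c = l ++ replicate k x := by
  induction n with
  | zero => exact .inl (by simpa using h)
  | succ n ih =>
    rw [replicate_succ', ← append_assoc, prefix_concat_iff] at h
    rcases h with h | h
    · exact .inr ⟨n + 1, by rw [h, replicate_succ', append_assoc]⟩
    · exact ih h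

theorem prefix_or_prefix_append_replicate (l : List α) (x : α) (m n : ℕ) :
    l ++ replicate m x <+: l ++ replicate n x ∨ l ++ replicate n x <+: l ++ replicate m x := by
  rcases le_total m n with h | h
  · exact .inl ⟨replicate (n - m) x, by rw [append_assoc, ← replicate_add, Nat.add_sub_cancel' h]⟩
  · exact .inr ⟨replicate (m - n) x, by rw [append_assoc, ← replicate_add, Nat.add_sub_cancel' h]⟩

theorem rdropWhile_not_eq_self_iff {l : List Bool} :
    l.rdropWhile (!·) = l ↔ l = [] ∨ ∃ u, l = u ++ [true] := by
  rcases l.eq_nil_or_concat with rfl | ⟨u, b, rfl⟩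
  · simp
  · cases b
    · rw [concat_eq_append, rdropWhile_concat_pos (!·) u false rfl]
      refine iff_of_false (fun h => ?_) (by simp)
      have := (rdropWhile_prefix (!·) u).length_le
      rw [h] at this
      simp at this
    · simp

theorem exists_eq_rdropWhile_not_append_replicate (w : List Bool) :
    ∃ m, w = w.rdropWhile (!·) ++ replicate m false := by
  refine ⟨_, (rdropWhile_append_rtakeWhile (p := (!·))).symm.trans
    (congrArg _ (eq_replicate_of_mem fun b hb => ?_))⟩
  simpa using mem_rtakeWhile_imp hb

end List

open List

namespace PrefixFree

variable {C : Set (List Bool)}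

theorem insert {u : List Bool} (hC : PrefixFree C) (hu : ∀ c ∈ C, ¬c <+: u ∧ ¬u <+: c) :
    PrefixFree (insert u C) := by
  rintro x (rfl | hx) y (rfl | hy) hxy
  · rfl
  · exact absurd hxy (hu y hy).2
  · exact absurd hxy (hu x hx).1
  · exact hC x hx y hy hxy

theorem exists_mem_prefix_or_prefix (hC : PrefixFree C)
    (hmax : ∀ D : Set (List Bool), PrefixFree D → C ⊆ D → D = C) (u : List Bool) :
    ∃ c ∈ C, c <+: u ∨ u <+: c := by
  by_contra! h
  have huC : u ∈ C := hmax _ (hC.insert h) (Set.subset_insert u C) ▸ Set.mem_insert u C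
  exact (h u huC).1 (prefix_refl u)

theorem eq_singleton_nil (hC : PrefixFree C) (hnil : [] ∈ C) : C = {[]} :=
  Set.eq_singleton_iff_unique_mem.2 ⟨hnil, fun x hx => (hC [] hnil x hx x.nil_prefix).symm⟩

theorem eq_of_eq_append_replicate (hC : PrefixFree C) {w₁ w₂ l : List Bool} {x : Bool}
    {m n : ℕ} (hw₁ : w₁ ∈ C) (hw₂ : w₂ ∈ C) (hm : w₁ = l ++ replicate m x)
    (hn : w₂ = l ++ replicate n x) : w₁ = w₂ := by
  subst hm hn
  rcases prefix_or_prefix_append_replicate l x m n with h | h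
  exacts [hC _ hw₁ _ hw₂ h, (hC _ hw₂ _ hw₁ h).symm]

theorem not_prefix_of_mem_Pb (hC : PrefixFree C) (hne : C ≠ {[]}) {c p : List Bool}
    (hc : c ∈ C) (hp : p ∈ Pb C) : ¬c <+: p := by
  intro hcp
  rcases hp with rfl | ⟨⟨c', hc', hpc', hpne⟩, -⟩
  · exact hne (hC.eq_singleton_nil (prefix_nil.1 hcp ▸ hc))
  · obtain rfl := hC c hc c' hc' (hcp.trans hpc')
    exact hpne (hpc'.eq_of_length (le_antisymm hpc'.length_le hcp.length_le))

end PrefixFree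

section

variable {C : Set (List Bool)}

theorem rdropWhile_not_eq_self_of_mem_Pb {p : List Bool} (hp : p ∈ Pb C) :
    p.rdropWhile (!·) = p := by
  rcases hp with rfl | ⟨-, hp⟩
  exacts [rfl, rdropWhile_not_eq_self_iff.2 (.inr hp)]

theorem rdropWhile_not_mem_Pb_of_mem_Ca {w : List Bool} (hw : w ∈ Ca C) :
    w.rdropWhile (!·) ∈ Pb C := by
  obtain ⟨hwC, u, rfl⟩ := hw
  rcases rdropWhile_not_eq_self_iff.1 (rdropWhile_idempotent (!·) (u ++ [false])) with h | ⟨v, hv⟩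
  · exact .inl h
  · refine .inr ⟨⟨_, hwC, rdropWhile_prefix _ _, fun h => ?_⟩, v, hv⟩
    simpa [h] using congrArg getLast? hv

theorem injOn_rdropWhile_not (hC : PrefixFree C) : Set.InjOn (rdropWhile (!·)) (Ca C) := by
  intro w₁ hw₁ w₂ hw₂ heq
  obtain ⟨m₁, hm₁⟩ := exists_eq_rdropWhile_not_append_replicate w₁
  obtain ⟨m₂, hm₂⟩ := exists_eq_rdropWhile_not_append_replicate w₂
  exact hC.eq_of_eq_append_replicate hw₁.1 hw₂.1 (heq ▸ hm₁) hm₂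

theorem surjOn_rdropWhile_not (hfin : C.Finite) (hC : PrefixFree C)
    (hmax : ∀ D : Set (List Bool), PrefixFree D → C ⊆ D → D = C) (hne : C ≠ {[]}) :
    Set.SurjOn (rdropWhile (!·)) (Ca C) (Pb C) := by
  intro p hp
  obtain ⟨N, hN⟩ := (hfin.image length).bddAbove
  obtain ⟨c, hc, hcp | hpc⟩ := hC.exists_mem_prefix_or_prefix hmax (p ++ replicate (N + 1) false)
  · have hnot := hC.not_prefix_of_mem_Pb hne hc hp
    obtain ⟨_ | k, rfl⟩ := (prefix_append_replicate hcp).resolve_left hnot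
    · exact absurd (by simp) hnot
    refine ⟨p ++ replicate (k + 1) false, ⟨hc, p ++ replicate k false, ?_⟩, ?_⟩
    · rw [replicate_succ', append_assoc]
    · rw [rdropWhile_append_replicate rfl, rdropWhile_not_eq_self_of_mem_Pb hp]
  · have := hpc.length_le.trans (hN ⟨c, hc, rfl⟩)
    simp only [length_append, length_replicate] at this
    omega

end

/-- For a finite maximal prefix-free set C ≠ {1}, the map sending w ∈ C_a to the unique
p ∈ P_b with w ∈ p a* is a bijection from C_a onto P_b. -/
theorem stmt13 (C : Set (List Bool)) (hfin : C.Finite) (hpf : PrefixFree C)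
    (hmax : ∀ D : Set (List Bool), PrefixFree D → C ⊆ D → D = C)
    (hne : C ≠ {[]}) :
    ∃ f : List Bool → List Bool,
      (∀ w ∈ Ca C, f w ∈ Pb C ∧ ∃ m : ℕ, w = f w ++ List.replicate m false) ∧
      (∀ w ∈ Ca C, ∀ p ∈ Pb C,
        (∃ m : ℕ, w = p ++ List.replicate m false) → p = f w) ∧
      Set.BijOn f (Ca C) (Pb C) := by
  refine ⟨rdropWhile (!·), fun w hw => ⟨rdropWhile_not_mem_Pb_of_mem_Ca hw,
    exists_eq_rdropWhile_not_append_replicate w⟩, ?_,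
    ⟨fun _ => rdropWhile_not_mem_Pb_of_mem_Ca, injOn_rdropWhile_not hpf,
      surjOn_rdropWhile_not hfin hpf hmax hne⟩⟩
  rintro w - p hp ⟨m, rfl⟩
  rw [rdropWhile_append_replicate rfl, rdropWhile_not_eq_self_of_mem_Pb hp]
end

section
/- In the lexicographically ordered free monoid {a,b}*, each equivalence class of the relation u ∼ v ⟺ u a* ∩ v a* ≠ ∅ is an interval: if u < v < u a^i then v = u a^h for some 1 ≤ h ≤ i−1. -/
private lemma lex_replicate_false {w : List Bool} : ∀ {i : ℕ},
    List.Lex (· < ·) w (List.replicate i false) →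
    ∃ h : ℕ, w = List.replicate h false ∧ h < i := by
  induction w with
  | nil =>
    intro i h
    cases i with
    | zero => simp at h
    | succ n => exact ⟨0, rfl, Nat.succ_pos _⟩
  | cons x w ih =>
    intro i h
    cases i with
    | zero => simp [List.replicate] at h
    | succ n =>
      simp only [List.replicate] at h
      cases h with
      | cons h' =>
        obtain ⟨k, hk, hki⟩ := ih h'
        exact ⟨k + 1, by simp [List.replicate, hk], by omega⟩
      | rel hr => exact absurd hr (by simp)

private lemma lex_prefix : ∀ (u v z : List Bool),
    List.Lex (· < ·) u v → List.Lex (· < ·) v (u ++ z) →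
    ∃ w, v = u ++ w := by
  intro u
  induction u with
  | nil => intro v z _ _; exact ⟨v, rfl⟩
  | cons x u ih =>
    intro v z h1 h2
    cases h1 with
    | cons h1' =>
      rename_i v'
      cases h2 with
      | cons h2' =>
        obtain ⟨w, hw⟩ := ih v' z h1' h2'
        exact ⟨w, by simp [hw]⟩
      | rel hr => exact absurd hr (lt_irrefl _)
    | rel hr =>
      rename_i y v'
      cases h2 with
      | cons _ => exact absurd hr (lt_irrefl _)
      | rel hr2 => exact absurd (hr.trans hr2) (lt_irrefl _)

private lemma lex_cancel : ∀ (u x y : List Bool),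
    List.Lex (· < ·) (u ++ x) (u ++ y) → List.Lex (· < ·) x y := by
  intro u
  induction u with
  | nil => intro x y h; simpa using h
  | cons a u ih =>
    intro x y h
    simp only [List.cons_append] at h
    cases h with
    | cons h' => exact ih x y h'
    | rel hr => exact absurd hr (lt_irrefl _)

private lemma lex_irrefl : ∀ u : List Bool, ¬ List.Lex (· < ·) u u := by
  intro u
  induction u with
  | nil => intro h; cases h
  | cons a u ih =>
    intro h
    cases h with
    | cons h' => exact ih h'
    | rel hr => exact lt_irrefl _ hr

/-- Each equivalence class u a* is an interval for the lexicographic order: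
if u < v < u a^i then v = u a^h for some 1 ≤ h ≤ i−1. (a = false < b = true.) -/
theorem stmt15 (u v : List Bool) (i : ℕ)
    (h1 : List.Lex (· < ·) u v)
    (h2 : List.Lex (· < ·) v (u ++ List.replicate i false)) :
    ∃ h : ℕ, 1 ≤ h ∧ h ≤ i - 1 ∧ v = u ++ List.replicate h false := by
  obtain ⟨w, rfl⟩ := lex_prefix u v (List.replicate i false) h1 h2
  have hw : List.Lex (· < ·) w (List.replicate i false) := lex_cancel u _ _ h2
  obtain ⟨h, rfl, hhi⟩ := lex_replicate_false hw
  have hne : h ≠ 0 := by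
    rintro rfl
    simp only [List.replicate, List.append_nil] at h1
    exact lex_irrefl u h1
  exact ⟨h, by omega, by omega, rfl⟩
end

section
/- A permutation σ ∈ S_n with successive positions i₁ < ⋯ < i_k of left-to-right maxima is indecomposable if and only if σ(i_j) ≥ i_{j+1} for all j = 1, …, k−1. -/
/-- i is a position of a left-to-right maximum of σ. -/
def IsLRMax {n : ℕ} (σ : Equiv.Perm (Fin n)) (i : Fin n) : Prop :=
  ∀ h : Fin n, h < i → σ h < σ i

/-- σ ∈ S_n is indecomposable iff σ(i_j) ≥ i_{j+1} for every pair of successive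
left-to-right maxima positions i_j < i_{j+1} (0-indexed: j ≤ σ i). -/
theorem stmt17 (n : ℕ) (σ : Equiv.Perm (Fin n)) :
    (∀ i : ℕ, 1 ≤ i → i < n →
      Set.image σ {x : Fin n | (x : ℕ) < i} ≠ {x : Fin n | (x : ℕ) < i}) ↔
    (∀ i j : Fin n, IsLRMax σ i → IsLRMax σ j → i < j →
      (∀ l : Fin n, i < l → l < j → ¬ IsLRMax σ l) → j ≤ σ i) := by
  classical
  constructor
  · intro hind i j hi hj hij hbet
    by_contra hlt
    push_neg at hlt
    have hj1 : 1 ≤ (j : ℕ) := by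
      have : (i : ℕ) < (j : ℕ) := hij
      omega
    apply hind (j : ℕ) hj1 j.isLt
    have claim0 : ∀ N : ℕ, ∀ x : Fin n, (x : ℕ) < N → x < j → σ x ≤ σ i := by
      intro N
      induction N with
      | zero => intro x hx; exact absurd hx (Nat.not_lt_zero _)
      | succ N ih =>
        intro x hxN hxj
        rcases lt_trichotomy x i with h | h | h
        · exact (hi x h).le
        · exact le_of_eq (by rw [h])
        · have hnot := hbet x h hxj
          simp only [IsLRMax] at hnot
          push_neg at hnot
          obtain ⟨h', hh'x, hle⟩ := hnot
          have hh'N : (h' : ℕ) < N := by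
            have : (h' : ℕ) < (x : ℕ) := hh'x
            omega
          exact le_trans hle (ih h' hh'N (lt_trans hh'x hxj))
    have claim : ∀ x : Fin n, x < j → σ x ≤ σ i := fun x => claim0 n x x.isLt
    have hsub : Set.image σ {x : Fin n | (x : ℕ) < (j : ℕ)} ⊆ {x : Fin n | (x : ℕ) < (j : ℕ)} := by
      rintro _ ⟨x, hx, rfl⟩
      have hxj : x < j := hx
      have h1 : σ x ≤ σ i := claim x hxj
      have h2 : ((σ i : Fin n) : ℕ) < (j : ℕ) := hlt
      exact lt_of_le_of_lt h1 h2
    apply Set.eq_of_subset_of_ncard_le hsub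
    rw [Set.ncard_image_of_injective _ σ.injective]
  · intro h i hi1 hin heq
    have hlow : ∀ x : Fin n, (x : ℕ) < i → ((σ x : Fin n) : ℕ) < i := by
      intro x hx
      have : σ x ∈ Set.image σ {x : Fin n | (x : ℕ) < i} := ⟨x, hx, rfl⟩
      rw [heq] at this
      exact this
    have hhigh : ∀ x : Fin n, i ≤ (x : ℕ) → i ≤ ((σ x : Fin n) : ℕ) := by
      intro x hx
      by_contra hc
      push_neg at hc
      have hmem : σ x ∈ ({y : Fin n | (y : ℕ) < i} : Set (Fin n)) := hc
      rw [← heq] at hmem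
      obtain ⟨y, hy, hyx⟩ := hmem
      have hy' : (y : ℕ) < i := hy
      have hyx' : y = x := σ.injective hyx
      subst hyx'
      omega
    -- m : argmax of σ on positions < i
    set S : Finset (Fin n) := Finset.univ.filter (fun x : Fin n => (x : ℕ) < i) with hS
    have hSne : S.Nonempty := by
      refine ⟨⟨0, by omega⟩, ?_⟩
      simp [hS]
      omega
    obtain ⟨m, hmS, hmmax⟩ := S.exists_max_image σ hSne
    have hmi : (m : ℕ) < i := by
      have := Finset.mem_filter.mp hmS
      exact this.2
    have hmLR : IsLRMax σ m := by
      intro x hxm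
      have hxS : x ∈ S := by
        simp only [hS, Finset.mem_filter, Finset.mem_univ, true_and]
        have : (x : ℕ) < (m : ℕ) := hxm
        omega
      have hle := hmmax x hxS
      rcases lt_or_eq_of_le hle with h' | h'
      · exact h'
      · exfalso
        have : x = m := σ.injective h'
        subst this
        exact lt_irrefl _ hxm
    -- M : argmax of σ on positions ≥ i, is an LR max
    set T : Finset (Fin n) := Finset.univ.filter (fun x : Fin n => i ≤ (x : ℕ)) with hT
    have hTne : T.Nonempty := by
      refine ⟨⟨i, hin⟩, ?_⟩
      simp [hT]
    obtain ⟨M, hMT, hMmax⟩ := T.exists_max_image σ hTne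
    have hMi : i ≤ (M : ℕ) := (Finset.mem_filter.mp hMT).2
    have hMLR : IsLRMax σ M := by
      intro x hxM
      rcases lt_or_ge (x : ℕ) i with hxi | hxi
      · have h1 := hlow x hxi
        have h2 := hhigh M hMi
        exact Fin.lt_def.mpr (by omega)
      · have hxT : x ∈ T := by
          simp only [hT, Finset.mem_filter, Finset.mem_univ, true_and]
          exact hxi
        have hle := hMmax x hxT
        rcases lt_or_eq_of_le hle with h' | h'
        · exact h'
        · exfalso
          have : x = M := σ.injective h'
          subst this
          exact lt_irrefl _ hxM
    -- j : least LR max with position ≥ i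
    set U : Finset (Fin n) := Finset.univ.filter (fun x : Fin n => IsLRMax σ x ∧ i ≤ (x : ℕ)) with hU
    have hUne : U.Nonempty := ⟨M, by simp only [hU, Finset.mem_filter, Finset.mem_univ, true_and]; exact ⟨hMLR, hMi⟩⟩
    set j : Fin n := U.min' hUne with hj
    have hjU : j ∈ U := U.min'_mem hUne
    obtain ⟨hjLR, hji⟩ := (Finset.mem_filter.mp hjU).2
    have hmj : m < j := Fin.lt_def.mpr (by omega)
    have hbet : ∀ l : Fin n, m < l → l < j → ¬ IsLRMax σ l := by
      intro l hml hlj hlLR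
      rcases lt_or_ge (l : ℕ) i with hli | hli
      · have hlS : l ∈ S := by
          simp only [hS, Finset.mem_filter, Finset.mem_univ, true_and]; exact hli
        have h1 := hmmax l hlS
        have h2 := hlLR m hml
        exact absurd h1 (not_le.mpr h2)
      · have hlU : l ∈ U := by
          simp only [hU, Finset.mem_filter, Finset.mem_univ, true_and]
          exact ⟨hlLR, hli⟩
        have := U.min'_le l hlU
        exact absurd hlj (not_lt.mpr this)
    have hfin := h m j hmLR hjLR hmj hbet
    have h1 : ((σ m : Fin n) : ℕ) < i := hlow m hmi
    have h2 : (j : ℕ) ≤ ((σ m : Fin n) : ℕ) := hfin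
    omega
end

section
/- Let θ ∈ S_n have left-to-right maxima at positions i₁ < ⋯ < i_k with values j₁ < ⋯ < j_k, and let σ ∈ S_{n−k} be the standardization of the word obtained from θ(1)⋯θ(n) by deleting the left-to-right maximal values. Then p(θ) = p(σ) + kn − k(k+1)/2 + Σ_{s=1}^{k} (j_s − i_s), where p(τ) = inv(τ) + m(m−1)/2 for τ ∈ S_m. -/
instance {n : ℕ} (σ : Equiv.Perm (Fin n)) (i : Fin n) : Decidable (IsLRMax σ i) :=
  inferInstanceAs (Decidable (∀ h : Fin n, h < i → σ h < σ i))

/-- p(τ) = |{(i,j) : j < τ(i) or i > τ⁻¹(j)}| (= inv(τ) + m(m−1)/2). -/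
def pCount {m : ℕ} (τ : Equiv.Perm (Fin m)) : ℕ :=
  (Finset.univ.filter (fun p : Fin m × Fin m => p.2 < τ p.1 ∨ τ⁻¹ p.2 < p.1)).card

open Finset

lemma Finset.card_filter_prod_eq_sum {α β : Type*} [Fintype α] [Fintype β]
    (P : α → Prop) (Q : α → β → Prop) [DecidablePred P] [∀ a, DecidablePred (Q a)] :
    #{p : α × β | P p.1 ∧ Q p.1 p.2} = ∑ a ∈ {a | P a}, #{b | Q a b} := by
  rw [card_filter, Fintype.sum_prod_type, sum_filter]
  refine sum_congr rfl fun a _ => ?_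
  split_ifs with ha
  · simp only [ha, true_and, card_filter]
  · simp [ha]

lemma Nat.choose_two_add_mul_succ_div_two {k n : ℕ} (hk : k ≤ n) :
    n.choose 2 + k * (k + 1) / 2 = (n - k).choose 2 + k * n := by
  obtain ⟨m, rfl⟩ := Nat.exists_eq_add_of_le hk
  rw [Nat.add_sub_cancel_left, show k * (k + 1) / 2 = (k + 1).choose 2 by
    rw [Nat.choose_two_right, Nat.add_sub_cancel, Nat.mul_comm]]
  apply Nat.cast_injective (R := ℚ)
  push_cast [Nat.cast_choose_two]
  ring

namespace Equiv.Perm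

variable {m n : ℕ}

def invSet (τ : Perm (Fin m)) : Finset (Fin m × Fin m) :=
  {p | p.1 < p.2 ∧ τ p.2 < τ p.1}

lemma card_filter_apply_lt (τ : Perm (Fin m)) (i : Fin m) : #{h | τ h < τ i} = τ i := by
  rw [← Fin.card_Iio, ← filter_gt_eq_Iio]
  exact card_equiv τ (by simp)

lemma pCount_eq_choose_two_add_card_invSet (τ : Perm (Fin m)) :
    pCount τ = m.choose 2 + #(invSet τ) := by
  have hsubst : pCount τ = #{p : Fin m × Fin m | p.2 < p.1 ∨ τ p.2 < τ p.1} :=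
    (card_equiv ((Equiv.refl _).prodCongr τ) (by simp [or_comm])).symm
  have hsplit : ({p | p.2 < p.1 ∨ τ p.2 < τ p.1} : Finset (Fin m × Fin m))
      = ({p | p.2 < p.1} : Finset (Fin m × Fin m)) ∪ invSet τ := by
    rw [invSet, ← filter_or]
    refine filter_congr fun p _ => ?_
    rcases lt_trichotomy p.1 p.2 with h | h | h
    · simp [h, h.not_gt]
    · simp [h]
    · simp [h]
  have hdisj : _root_.Disjoint ({p | p.2 < p.1} : Finset (Fin m × Fin m)) (invSet τ) :=
    disjoint_filter.2 fun p _ h₁ h₂ => h₁.asymm h₂.1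
  have htri : #{p : Fin m × Fin m | p.2 < p.1} = m.choose 2 := by
    have := card_filter_prod_eq_sum (fun _ : Fin m => True) (fun a b : Fin m => b < a)
    simp only [true_and, filter_true] at this
    rw [this]
    simp_rw [filter_gt_eq_Iio, Fin.card_Iio]
    rw [Fin.sum_univ_eq_sum_range (fun i => i) m, sum_range_id, Nat.choose_two_right]
  rw [hsubst, hsplit, card_union_of_disjoint hdisj, htri]

lemma not_isLRMax_of_lt_of_apply_lt {θ : Perm (Fin n)} {i j : Fin n} (hij : i < j)
    (hθ : θ j < θ i) : ¬ IsLRMax θ j :=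
  fun hj => (hj i hij).asymm hθ

lemma card_filter_lt_apply_lt_of_isLRMax {θ : Perm (Fin n)} {i : Fin n} (hi : IsLRMax θ i) :
    #{h | i < h ∧ θ h < θ i} = θ i - i := by
  have hbefore : ({h | θ h < θ i} : Finset (Fin n)).filter (· < i) = Iio i := by
    ext h
    simpa using fun hh => hi h hh
  have hafter : ({h | θ h < θ i} : Finset (Fin n)).filter (¬ · < i)
      = ({h | i < h ∧ θ h < θ i} : Finset (Fin n)) := by
    ext h
    simp only [mem_filter, mem_univ, true_and, not_lt]
    exact ⟨fun ⟨hθ, hih⟩ => ⟨hih.lt_of_ne (by rintro rfl; exact hθ.false), hθ⟩,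
      fun ⟨hih, hθ⟩ => ⟨hθ, hih.le⟩⟩
  have := card_filter_add_card_filter_not (s := {h | θ h < θ i}) (· < i)
  rw [hbefore, hafter, Fin.card_Iio, card_filter_apply_lt] at this
  omega

lemma card_invSet_eq_sum_add (θ : Perm (Fin n)) :
    #(invSet θ) = ∑ i ∈ {i | IsLRMax θ i}, ((θ i : ℕ) - (i : ℕ))
      + #{p ∈ invSet θ | ¬ IsLRMax θ p.1 ∧ ¬ IsLRMax θ p.2} := by
  have hmax :
      #{p ∈ invSet θ | IsLRMax θ p.1} = ∑ i ∈ {i | IsLRMax θ i}, ((θ i : ℕ) - (i : ℕ)) := by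
    rw [← sum_congr rfl fun i hi => card_filter_lt_apply_lt_of_isLRMax (mem_filter.1 hi).2,
      ← card_filter_prod_eq_sum, invSet, filter_filter]
    congr 1
    ext p
    simp only [mem_filter, mem_univ, true_and]
    exact and_comm
  have hrest : {p ∈ invSet θ | ¬ IsLRMax θ p.1}
      = {p ∈ invSet θ | ¬ IsLRMax θ p.1 ∧ ¬ IsLRMax θ p.2} :=
    filter_congr fun p hp => (and_iff_left_of_imp fun _ =>
      not_isLRMax_of_lt_of_apply_lt (mem_filter.1 hp).2.1 (mem_filter.1 hp).2.2).symm
  rw [← hmax, ← hrest, card_filter_add_card_filter_not]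

lemma card_filter_invSet_eq_of_orderEmbedding {θ : Perm (Fin n)} {σ : Perm (Fin m)}
    {S : Finset (Fin n)} (g f : Fin m ↪o Fin n) (hg : Set.range g = S)
    (h : ∀ x, θ (g x) = f (σ x)) :
    #{p ∈ invSet θ | p.1 ∈ S ∧ p.2 ∈ S} = #(invSet σ) := by
  have hmem : ∀ x, g x ∈ S := fun x => mem_coe.1 (hg ▸ Set.mem_range_self x)
  symm
  refine card_nbij (fun p => (g p.1, g p.2)) (fun p hp => ?_) (fun p _ q _ hpq => ?_) ?_
  · simp only [mem_coe, invSet, mem_filter, mem_univ, true_and, h] at hp ⊢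
    exact ⟨⟨g.lt_iff_lt.2 hp.1, f.lt_iff_lt.2 hp.2⟩, hmem _, hmem _⟩
  · simp only [Prod.mk.injEq, g.injective.eq_iff] at hpq
    exact Prod.ext hpq.1 hpq.2
  · rintro ⟨a, b⟩ hab
    simp only [mem_coe, invSet, mem_filter, mem_univ, true_and] at hab
    obtain ⟨⟨hlt, hθ⟩, ha, hb⟩ := hab
    obtain ⟨x, rfl⟩ : a ∈ Set.range g := hg ▸ ha
    obtain ⟨y, rfl⟩ : b ∈ Set.range g := hg ▸ hb
    refine ⟨(x, y), ?_, rfl⟩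
    simp only [mem_coe, invSet, mem_filter, mem_univ, true_and, h] at hθ ⊢
    exact ⟨g.lt_iff_lt.1 hlt, f.lt_iff_lt.1 hθ⟩

end Equiv.Perm

/-- Let θ ∈ S_n have k left-to-right maxima, at positions i₁<…<i_k with values j₁<…<j_k,
and let σ ∈ S_{n−k} be the standardization of the word obtained from θ by deleting
the left-to-right maxima (σ is characterized by `hσ` via the order isomorphisms of the
remaining positions and values with Fin (n−k)). Then
p(θ) = p(σ) + kn − k(k+1)/2 + Σ (j_s − i_s). -/
theorem stmt18 (n : ℕ) (θ : Equiv.Perm (Fin n)) (k : ℕ)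
    (hk : (Finset.univ.filter (fun i : Fin n => IsLRMax θ i)).card = k)
    (hB : (Finset.univ.filter (fun i : Fin n => ¬ IsLRMax θ i)).card = n - k)
    (hV : ((Finset.univ.filter (fun i : Fin n => ¬ IsLRMax θ i)).image θ).card = n - k)
    (σ : Equiv.Perm (Fin (n - k)))
    (hσ : ∀ x : Fin (n - k),
      (((((Finset.univ.filter (fun i : Fin n => ¬ IsLRMax θ i)).image θ).orderIsoOfFin hV)
          (σ x) : Fin n))
        = θ ((((Finset.univ.filter (fun i : Fin n => ¬ IsLRMax θ i)).orderIsoOfFin hB)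
            x : Fin n))) :
    pCount θ = pCount σ + k * n - k * (k + 1) / 2
      + ∑ i ∈ Finset.univ.filter (fun i : Fin n => IsLRMax θ i),
          ((θ i : ℕ) - (i : ℕ)) := by
  have hkn : k ≤ n := by
    rw [← hk]
    exact (card_le_univ _).trans_eq (Fintype.card_fin n)
  have hpattern : #{p ∈ θ.invSet | ¬ IsLRMax θ p.1 ∧ ¬ IsLRMax θ p.2} = #σ.invSet := by
    have := Equiv.Perm.card_filter_invSet_eq_of_orderEmbedding
      (orderEmbOfFin _ hB) (orderEmbOfFin _ hV) (range_orderEmbOfFin _ hB)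
      fun x => by simpa only [← coe_orderIsoOfFin_apply] using (hσ x).symm
    simpa using this
  rw [θ.pCount_eq_choose_two_add_card_invSet, σ.pCount_eq_choose_two_add_card_invSet,
    θ.card_invSet_eq_sum_add, hpattern]
  have := Nat.choose_two_add_mul_succ_div_two hkn
  omega
end
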